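/- Let h : ℝ → ℝ be four times continuously differentiable in a neighborhood of x ∈ ℝ and let s ∈ ℝ be fixed; set η = s·Δx². Then the k = 3 MQ-RBF reconstruction with the central stencil satisfies (−1/6 − η/6)·h̄₋ + (5/6 − (2/3)·η)·h̄₀ + (1/3 + (5/6)·η)·h̄₊ = h(x) + (s·h'(x) + (1/12)·h'''(x))·Δx³ + O(Δx⁴). -/

import Mathlib

/-!
Write `h` as its cubic Taylor polynomial at `x` plus a remainder `R = O((t - x)⁴)`. On the cubic
the reconstruction is computed exactly: it returns `h x + (s h' + h'''/12) d³` up to the term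
`s (h''' d - h'') d⁴ / 6`. On `R` every cell average is `O(d⁴)` because the cells lie within `2d`
of `x`, and the weights stay bounded as `d → 0`.
-/

open Set Filter Topology Asymptotics MeasureTheory
open scoped Nat

theorem Asymptotics.IsBigO.continuousAt_mul_left {α : Type*} [TopologicalSpace α] {a : α}
    {c f g : α → ℝ} (hf : f =O[𝓝 a] g) (hc : ContinuousAt c a) :
    (fun y => c y * f y) =O[𝓝 a] g := by
  simpa using (hc.tendsto.isBigO_one ℝ).mul hf

theorem ContDiffAt.isBigO_sub_taylor {E : Type*} [NormedAddCommGroup E] [NormedSpace ℝ E]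
    {f : ℝ → E} {x : ℝ} {n : ℕ} (hf : ContDiffAt ℝ (n + 1) f x) :
    (fun t => f t - ∑ k ∈ Finset.range (n + 1), ((k ! : ℝ)⁻¹ * (t - x) ^ k) • iteratedDeriv k f x)
      =O[𝓝 x] fun t => (t - x) ^ (n + 1) := by
  obtain ⟨u, hu, hfu⟩ := hf.contDiffOn le_rfl (by simp)
  obtain ⟨ε, hε, hball⟩ := Metric.mem_nhds_iff.mp hu
  have hx : x ∈ Metric.ball x ε := Metric.mem_ball_self hε
  have hlittle := taylor_isLittleO (n := n + 1) (convex_ball x ε) hx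
    (by exact_mod_cast hfu.mono hball)
  rw [nhdsWithin_eq_nhds.mpr (Metric.isOpen_ball.mem_nhds hx)] at hlittle
  have hderiv : ∀ k, iteratedDerivWithin k f (Metric.ball x ε) x = iteratedDeriv k f x :=
    fun k => iteratedDerivWithin_of_isOpen Metric.isOpen_ball hx
  have htop : (fun t => ((((n + 1) ! : ℕ) : ℝ)⁻¹ * (t - x) ^ (n + 1)) • iteratedDeriv (n + 1) f x)
      =O[𝓝 x] fun t => (t - x) ^ (n + 1) :=
    isBigO_of_le' (c := ((n + 1) ! : ℝ)⁻¹ * ‖iteratedDeriv (n + 1) f x‖) _ fun t => by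
      rw [norm_smul, norm_mul, norm_inv, RCLike.norm_natCast]
      exact le_of_eq (by ring)
  refine (hlittle.isBigO.add htop).congr_left fun t => ?_
  rw [taylor_within_apply, Finset.sum_range_succ _ (n + 1)]
  simp only [hderiv]
  abel

theorem isBigO_cellAverage_of_isBigO_pow {R : ℝ → ℝ} {x : ℝ} {n : ℕ}
    (hR : R =O[𝓝 x] fun t => (t - x) ^ n) (a b : ℝ) :
    (fun d => (1 / d) * ∫ t in (x + a * d)..(x + b * d), R t) =O[𝓝 0] fun d => d ^ n := by
  obtain ⟨C, hC, hRC⟩ := hR.exists_pos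
  obtain ⟨ε, hε, hnear⟩ := Metric.eventually_nhds_iff.mp hRC.bound
  set K := |a| + |b|
  have hsmall : ∀ᶠ d in 𝓝 (0 : ℝ), K * |d| < ε := by
    have : Tendsto (fun d : ℝ => K * |d|) (𝓝 0) (𝓝 0) :=
      (by fun_prop : Continuous fun d : ℝ => K * |d|).tendsto' 0 0 (by simp)
    exact this.eventually (gt_mem_nhds hε)
  refine IsBigO.of_bound (C * K ^ n * |b - a|) ?_
  filter_upwards [hsmall] with d hd
  rcases eq_or_ne d 0 with rfl | hd0
  · -- `1 / 0 = 0`, so the average vanishes at `d = 0`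
    simp only [div_zero, zero_mul, norm_zero]
    positivity
  have hcell : ∀ t ∈ uIoc (x + a * d) (x + b * d), ‖R t‖ ≤ C * (K * |d|) ^ n := by
    intro t ht
    have hmem {c : ℝ} (hc : |c| ≤ K) : x + c * d ∈ Icc (x - K * |d|) (x + K * |d|) := by
      have h1 := abs_le.mp (abs_mul c d).le
      have h2 := mul_le_mul_of_nonneg_right hc (abs_nonneg d)
      constructor <;> linarith [h1.1, h1.2]
    have htx : |t - x| ≤ K * |d| := abs_sub_le_iff.mpr (by
      have := uIcc_subset_Icc (hmem (le_add_of_nonneg_right (abs_nonneg b)))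
        (hmem (le_add_of_nonneg_left (abs_nonneg a))) (uIoc_subset_uIcc ht)
      constructor <;> linarith [this.1, this.2])
    calc ‖R t‖ ≤ C * ‖(t - x) ^ n‖ := hnear (by rw [Real.dist_eq]; exact htx.trans_lt hd)
      _ ≤ C * (K * |d|) ^ n := by
        rw [norm_pow, Real.norm_eq_abs]
        gcongr
  calc ‖(1 / d) * ∫ t in (x + a * d)..(x + b * d), R t‖
      ≤ |d|⁻¹ * (C * (K * |d|) ^ n * |x + b * d - (x + a * d)|) := by
        rw [norm_mul, one_div, norm_inv, Real.norm_eq_abs]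
        gcongr
        exact intervalIntegral.norm_integral_le_of_norm_le_const hcell
    _ = C * K ^ n * |b - a| * ‖d ^ n‖ := by
        rw [show x + b * d - (x + a * d) = (b - a) * d by ring, abs_mul, norm_pow,
          Real.norm_eq_abs, mul_pow]
        field_simp

theorem eventually_intervalIntegrable_of_eventually_continuousAt {E : Type*}
    [NormedAddCommGroup E] {f : ℝ → E} {x : ℝ} (hf : ∀ᶠ y in 𝓝 x, ContinuousAt f y)
    {ι : Type*} {l : Filter ι} {u v : ι → ℝ} (hu : Tendsto u l (𝓝 x)) (hv : Tendsto v l (𝓝 x)) :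
    ∀ᶠ i in l, IntervalIntegrable f volume (u i) (v i) := by
  obtain ⟨t, hcont, hopen, hxt⟩ := eventually_nhds_iff.mp hf
  exact (hcont x hxt).tendsto.eventually_intervalIntegrable
    (ContinuousAt.stronglyMeasurableAtFilter hopen hcont x hxt) (Measure.finiteAt_nhds _ _) hu hv

theorem integral_cubic (a₀ a₁ a₂ a₃ x u v : ℝ) :
    ∫ t in u..v, (a₀ + a₁ * (t - x) + a₂ / 2 * (t - x) ^ 2 + a₃ / 6 * (t - x) ^ 3) =
      a₀ * (v - u) + a₁ / 2 * ((v - x) ^ 2 - (u - x) ^ 2) + a₂ / 6 * ((v - x) ^ 3 - (u - x) ^ 3)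
        + a₃ / 24 * ((v - x) ^ 4 - (u - x) ^ 4) := by
  have hQ (t : ℝ) : HasDerivAt
      (fun t => a₀ * t + a₁ / 2 * (t - x) ^ 2 + a₂ / 6 * (t - x) ^ 3 + a₃ / 24 * (t - x) ^ 4)
      (a₀ + a₁ * (t - x) + a₂ / 2 * (t - x) ^ 2 + a₃ / 6 * (t - x) ^ 3) t := by
    have h1 : HasDerivAt (fun t => t - x) 1 t := (hasDerivAt_id t).sub_const x
    refine (((((hasDerivAt_id t).const_mul a₀).add ((h1.fun_pow 2).const_mul (a₁ / 2))).add
      ((h1.fun_pow 3).const_mul (a₂ / 6))).add ((h1.fun_pow 4).const_mul (a₃ / 24))).congr_deriv ?_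
    push_cast
    ring
  rw [intervalIntegral.integral_eq_sub_of_hasDerivAt (fun t _ => hQ t)
    (Continuous.intervalIntegrable (by fun_prop) _ _)]
  ring

/-- The `k = 3` MQ-RBF reconstruction at `x` from the cell averages `h̄₋, h̄₀, h̄₊` of width `d`,
with `η = s * d ^ 2`. -/
noncomputable def mqReconstruction (s d x : ℝ) (f : ℝ → ℝ) : ℝ :=
  (-(1 / 6) - s * d ^ 2 / 6) * ((1 / d) * ∫ ξ in (x - 2 * d)..(x - d), f ξ)
    + (5 / 6 - (2 / 3) * (s * d ^ 2)) * ((1 / d) * ∫ ξ in (x - d)..x, f ξ)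
    + (1 / 3 + (5 / 6) * (s * d ^ 2)) * ((1 / d) * ∫ ξ in x..(x + d), f ξ)

theorem mqReconstruction_sub {s d x : ℝ} {f g : ℝ → ℝ} (hd : 0 ≤ d)
    (hf : IntervalIntegrable f volume (x - 2 * d) (x + d))
    (hg : IntervalIntegrable g volume (x - 2 * d) (x + d)) :
    mqReconstruction s d x (fun t => f t - g t) =
      mqReconstruction s d x f - mqReconstruction s d x g := by
  have hcell {p : ℝ → ℝ} (hp : IntervalIntegrable p volume (x - 2 * d) (x + d)) {u v : ℝ}
      (hu : u ∈ Icc (x - 2 * d) (x + d)) (hv : v ∈ Icc (x - 2 * d) (x + d)) :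
      IntervalIntegrable p volume u v :=
    hp.mono_set (uIcc_of_le (by linarith : x - 2 * d ≤ x + d) ▸ uIcc_subset_Icc hu hv)
  have hm2 : x - 2 * d ∈ Icc (x - 2 * d) (x + d) := ⟨le_rfl, by linarith⟩
  have hm1 : x - d ∈ Icc (x - 2 * d) (x + d) := ⟨by linarith, by linarith⟩
  have hm0 : x ∈ Icc (x - 2 * d) (x + d) := ⟨by linarith, by linarith⟩
  have hp1 : x + d ∈ Icc (x - 2 * d) (x + d) := ⟨by linarith, le_rfl⟩
  simp only [mqReconstruction]
  rw [intervalIntegral.integral_sub (hcell hf hm2 hm1) (hcell hg hm2 hm1),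
    intervalIntegral.integral_sub (hcell hf hm1 hm0) (hcell hg hm1 hm0),
    intervalIntegral.integral_sub (hcell hf hm0 hp1) (hcell hg hm0 hp1)]
  ring

theorem mqReconstruction_cubic {s d : ℝ} (hd : d ≠ 0) (a₀ a₁ a₂ a₃ x : ℝ) :
    mqReconstruction s d x
        (fun t => a₀ + a₁ * (t - x) + a₂ / 2 * (t - x) ^ 2 + a₃ / 6 * (t - x) ^ 3) =
      a₀ + (s * a₁ + (1 / 12) * a₃) * d ^ 3 + s * (a₃ * d - a₂) / 6 * d ^ 4 := by
  simp only [mqReconstruction, integral_cubic]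
  field_simp
  ring

theorem mqReconstruction_isBigO {s x : ℝ} {R : ℝ → ℝ} {n : ℕ}
    (hR : R =O[𝓝 x] fun t => (t - x) ^ n) :
    (fun d => mqReconstruction s d x R) =O[𝓝 0] fun d => d ^ n := by
  have hleft := (isBigO_cellAverage_of_isBigO_pow hR (-2) (-1)).continuousAt_mul_left
    (c := fun d => -(1 / 6) - s * d ^ 2 / 6) (by fun_prop)
  have hmid := (isBigO_cellAverage_of_isBigO_pow hR (-1) 0).continuousAt_mul_left
    (c := fun d => 5 / 6 - (2 / 3) * (s * d ^ 2)) (by fun_prop)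
  have hright := (isBigO_cellAverage_of_isBigO_pow hR 0 1).continuousAt_mul_left
    (c := fun d => 1 / 3 + (5 / 6) * (s * d ^ 2)) (by fun_prop)
  simp only [neg_mul, one_mul, zero_mul, add_zero, ← sub_eq_add_neg] at hleft hmid hright
  exact (hleft.add hmid).add hright

theorem exists_bound_of_isBigO_nhdsGT {f : ℝ → ℝ} {n : ℕ}
    (hf : f =O[𝓝[>] 0] fun d => d ^ n) :
    ∃ C > 0, ∃ d₀ > 0, ∀ d : ℝ, 0 < d → d < d₀ → |f d| ≤ C * d ^ n := by
  obtain ⟨C, hC, hfC⟩ := hf.exists_pos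
  obtain ⟨d₀, hd₀, hsub⟩ := mem_nhdsGT_iff_exists_Ioo_subset.mp hfC.bound
  refine ⟨C, hC, d₀, hd₀, fun d hd hdd => ?_⟩
  simpa [abs_of_pos hd] using hsub ⟨hd, hdd⟩

/-- The k = 3 MQ-RBF reconstruction with the central stencil (r = 1 row):
`(−1/6 − η/6)h̄₋ + (5/6 − 2η/3)h̄₀ + (1/3 + 5η/6)h̄₊
   = h(x) + (s·h'(x) + (1/12)h'''(x))Δx³ + O(Δx⁴)` with `η = sΔx²`. -/
theorem stmt_14 (h : ℝ → ℝ) (x : ℝ) (hh : ContDiffAt ℝ 4 h x) (s : ℝ) :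
    ∃ C > 0, ∃ d₀ > 0, ∀ d : ℝ, 0 < d → d < d₀ →
      |(-(1 / 6) - s * d ^ 2 / 6) * ((1 / d) * ∫ ξ in (x - 2 * d)..(x - d), h ξ)
          + (5 / 6 - (2 / 3) * (s * d ^ 2)) * ((1 / d) * ∫ ξ in (x - d)..x, h ξ)
          + (1 / 3 + (5 / 6) * (s * d ^ 2)) * ((1 / d) * ∫ ξ in x..(x + d), h ξ)
          - h x - (s * deriv h x + (1 / 12) * iteratedDeriv 3 h x) * d ^ 3|
        ≤ C * d ^ 4 := by
  have hR : (fun t => h t - (h x + deriv h x * (t - x) + iteratedDeriv 2 h x / 2 * (t - x) ^ 2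
      + iteratedDeriv 3 h x / 6 * (t - x) ^ 3)) =O[𝓝 x] fun t => (t - x) ^ 4 := by
    refine (ContDiffAt.isBigO_sub_taylor (n := 3) hh).congr_left fun t => ?_
    simp only [Finset.sum_range_succ, Finset.sum_range_zero, Nat.factorial, smul_eq_mul,
      iteratedDeriv_zero, iteratedDeriv_one]
    push_cast
    ring
  have hIntegrable : ∀ᶠ d in 𝓝 (0 : ℝ), IntervalIntegrable h volume (x - 2 * d) (x + d) :=
    eventually_intervalIntegrable_of_eventually_continuousAt
      ((hh.eventually (by simp)).mono fun _ hy => hy.continuousAt)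
      ((by fun_prop : Continuous fun d : ℝ => x - 2 * d).tendsto' 0 x (by simp))
      ((by fun_prop : Continuous fun d : ℝ => x + d).tendsto' 0 x (by simp))
  refine exists_bound_of_isBigO_nhdsGT (f := fun d => mqReconstruction s d x h - h x
    - (s * deriv h x + (1 / 12) * iteratedDeriv 3 h x) * d ^ 3) ?_
  have hdecomp : ∀ᶠ d in 𝓝[>] 0,
      s * (iteratedDeriv 3 h x * d - iteratedDeriv 2 h x) / 6 * d ^ 4
        + mqReconstruction s d x (fun t => h t - (h x + deriv h x * (t - x)
          + iteratedDeriv 2 h x / 2 * (t - x) ^ 2 + iteratedDeriv 3 h x / 6 * (t - x) ^ 3)) =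
        mqReconstruction s d x h - h x
          - (s * deriv h x + (1 / 12) * iteratedDeriv 3 h x) * d ^ 3 := by
    filter_upwards [self_mem_nhdsWithin, nhdsWithin_le_nhds hIntegrable] with d hd hI
    rw [mqReconstruction_sub hd.le hI (Continuous.intervalIntegrable (by fun_prop) _ _),
      mqReconstruction_cubic hd.ne']
    ring
  refine IsBigO.congr' ?_ hdecomp EventuallyEq.rfl
  have hpoly := (isBigO_refl (fun d : ℝ => d ^ 4) (𝓝 0)).continuousAt_mul_left
    (c := fun d => s * (iteratedDeriv 3 h x * d - iteratedDeriv 2 h x) / 6) (by fun_prop)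
  exact (hpoly.add (mqReconstruction_isBigO hR)).mono nhdsWithin_le_nhds
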